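/- Fix an integer m ≥ 2. The map ψ defined on finite simple graphs by ψ(G) = n(G) − c(G) is a (reg,m)-compatible map, i.e., it satisfies conditions (a), (b) and (c) of the definition of (reg,m)-compatibility. -/

import Mathlib

/-!
For `ψ = n - c`: deleting a set of vertices removes at most one component per deleted vertex, so
`ψ` never increases under vertex deletion, and deleting a non-isolated vertex removes no
component, so `ψ` strictly drops. Joining the neighbours of `v` leaves reachability, hence `ψ`,
unchanged. If some component is not complete, the second vertex `v` of a shortest path between
two non-adjacent vertices of it has two non-adjacent neighbours, so `v` is internal, and it
satisfies the second alternative of (c).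
-/

/-- A maximal clique of a simple graph: a clique that is maximal under inclusion. -/
def MaxClq {V : Type*} (G : SimpleGraph V) (s : Set V) : Prop :=
  G.IsClique s ∧ ∀ t : Set V, G.IsClique t → s ⊆ t → s = t

/-- An internal vertex: a vertex lying in at least two (distinct) maximal cliques. -/
def InternalVtx {V : Type*} (G : SimpleGraph V) (v : V) : Prop :=
  ∃ s t : Set V, MaxClq G s ∧ MaxClq G t ∧ s ≠ t ∧ v ∈ s ∧ v ∈ t

/-- `iv G`: the number of internal vertices of `G`. -/
noncomputable def ivNum {V : Type*} (G : SimpleGraph V) : ℕ :=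
  {v : V | InternalVtx G v}.ncard

/-- `c G`: the number of connected components of `G`. -/
noncomputable def compNum {V : Type*} (G : SimpleGraph V) : ℕ :=
  Nat.card G.ConnectedComponent

/-- `𝒞 G`: the number of maximal cliques of `G`. -/
noncomputable def maxClqNum {V : Type*} (G : SimpleGraph V) : ℕ :=
  {s : Set V | MaxClq G s}.ncard

/-- `ω G`: the clique number of `G`, the maximum size of a clique. -/
noncomputable def clqNum {V : Type*} (G : SimpleGraph V) : ℕ :=
  sSup {k : ℕ | ∃ s : Set V, G.IsClique s ∧ s.ncard = k}

/-- A set of edges of `G` is clique-disjoint if no two distinct edges of it are both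
contained in a single clique of `G`. -/
def CliqueDisjointEdges {V : Type*} (G : SimpleGraph V) (E : Set (Sym2 V)) : Prop :=
  E ⊆ G.edgeSet ∧ ∀ e ∈ E, ∀ f ∈ E, e ≠ f →
    ¬ ∃ s : Set V, G.IsClique s ∧ (∀ x ∈ e, x ∈ s) ∧ (∀ x ∈ f, x ∈ s)

/-- `η G`: the maximum cardinality of a clique-disjoint set of edges of `G`. -/
noncomputable def etaNum {V : Type*} (G : SimpleGraph V) : ℕ :=
  sSup {k : ℕ | ∃ E : Set (Sym2 V), CliqueDisjointEdges G E ∧ E.ncard = k}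

/-- `G_v`: the graph on the same vertex set as `G` whose edges are those of `G` together
with all edges between distinct neighbours of `v`. -/
def addNbrEdges {V : Type*} (G : SimpleGraph V) (v : V) : SimpleGraph V where
  Adj a b := G.Adj a b ∨ (a ≠ b ∧ G.Adj v a ∧ G.Adj v b)
  symm := by
    constructor
    intro a b h
    rcases h with h | ⟨hne, h1, h2⟩
    · exact Or.inl h.symm
    · exact Or.inr ⟨hne.symm, h2, h1⟩
  loopless := by
    constructor
    intro a h
    rcases h with h | ⟨hne, _, _⟩
    · exact G.irrefl h
    · exact hne rfl

/-- A map `ψ` from finite simple graphs to `ℕ` is `(reg, m)`-compatible if: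
(a) `ψ(Ĝ) ≤ ψ(G)` where `Ĝ` is obtained from `G` by deleting all isolated vertices;
(b) if every connected component of `G` is a complete graph on at least 2 vertices,
then `ψ(G) ≥ Σ_i min {m − 1, n_i − 1}` where the `n_i` are the component sizes;
(c) if some connected component of `G` is not complete, then there is an internal vertex
`v` with `ψ(G∖v) ≤ ψ(G)` and `ψ(G_v) < ψ(G)`, or with `ψ(G∖v) ≤ ψ(G)`,
`ψ(G_v) = ψ(G)` and `ψ(G_v∖v) < ψ(G)`. -/
def RegCompatible (m : ℕ) (ψ : ∀ (V : Type) [Finite V], SimpleGraph V → ℕ) : Prop :=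
  (∀ (V : Type) [Finite V] (G : SimpleGraph V),
      ψ _ (G.induce {u : V | ∃ w : V, G.Adj u w}) ≤ ψ V G) ∧
  (∀ (V : Type) [Finite V] (G : SimpleGraph V),
      (∀ u w : V, G.Reachable u w → u ≠ w → G.Adj u w) →
      (∀ u : V, ∃ w : V, u ≠ w ∧ G.Reachable u w) →
      ∑ᶠ c : G.ConnectedComponent, min (m - 1) (c.supp.ncard - 1) ≤ ψ V G) ∧
  (∀ (V : Type) [Finite V] (G : SimpleGraph V),
      (∃ u w : V, u ≠ w ∧ G.Reachable u w ∧ ¬ G.Adj u w) →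
      ∃ v : V, InternalVtx G v ∧
        ((ψ _ (G.induce {u : V | u ≠ v}) ≤ ψ V G ∧ ψ V (addNbrEdges G v) < ψ V G) ∨
          (ψ _ (G.induce {u : V | u ≠ v}) ≤ ψ V G ∧ ψ V (addNbrEdges G v) = ψ V G ∧
            ψ _ ((addNbrEdges G v).induce {u : V | u ≠ v}) < ψ V G)))

section

open SimpleGraph

variable {V : Type*}

lemma SimpleGraph.exists_adj_adj_not_adj_of_reachable {G : SimpleGraph V} {u w : V}
    (hne : u ≠ w) (hreach : G.Reachable u w) (hadj : ¬ G.Adj u w) :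
    ∃ v a b, G.Adj v a ∧ G.Adj v b ∧ ¬ G.Adj a b ∧ a ≠ b := by
  obtain ⟨p, hp⟩ := hreach.exists_walk_length_eq_dist
  obtain ⟨a, v, b, hav, hvb, hab, hne⟩ :=
    p.exists_adj_adj_not_adj_ne hp (hreach.one_lt_dist_of_ne_of_not_adj hne hadj)
  exact ⟨v, a, b, hav.symm, hvb, hab, hne⟩

lemma compNum_eq_of_le_of_adj_reachable {G G' : SimpleGraph V} (hle : G ≤ G')
    (h : ∀ ⦃x y⦄, G'.Adj x y → G.Reachable x y) : compNum G' = compNum G := by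
  have hreach {x y : V} (hxy : G'.Reachable x y) : G.Reachable x y := by
    rw [reachable_iff_reflTransGen] at hxy ⊢
    exact Relation.ReflTransGen.lift' id
      (fun _ _ hab => (reachable_iff_reflTransGen _ _).mp (h hab)) _ _ hxy
  refine (Nat.card_eq_of_bijective _ ⟨?_, ConnectedComponent.surjective_map_ofLE hle⟩).symm
  refine ConnectedComponent.ind₂ fun x y hxy => ConnectedComponent.sound (hreach ?_)
  exact ConnectedComponent.exact hxy

lemma compNum_addNbrEdges (G : SimpleGraph V) (v : V) : compNum (addNbrEdges G v) = compNum G :=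
  compNum_eq_of_le_of_adj_reachable (fun _ _ => Or.inl) fun _ _ hxy =>
    hxy.elim Adj.reachable fun ⟨_, hx, hy⟩ => hx.reachable.symm.trans hy.reachable

variable [Finite V]

lemma compNum_le_compNum_induce_add_ncard_compl (G : SimpleGraph V) (S : Set V) :
    compNum G ≤ compNum (G.induce S) + Sᶜ.ncard := by
  let f : (G.induce S).ConnectedComponent ⊕ ↥Sᶜ → G.ConnectedComponent :=
    Sum.elim (ConnectedComponent.map (Embedding.induce S).toHom) (G.connectedComponentMk ·)
  have hf : Function.Surjective f := by
    refine ConnectedComponent.ind fun u => ?_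
    by_cases hu : u ∈ S
    · exact ⟨.inl ((G.induce S).connectedComponentMk ⟨u, hu⟩), rfl⟩
    · exact ⟨.inr ⟨u, hu⟩, rfl⟩
  calc compNum G ≤ Nat.card ((G.induce S).ConnectedComponent ⊕ ↥Sᶜ) :=
        Nat.card_le_card_of_surjective f hf
    _ = compNum (G.induce S) + Sᶜ.ncard := by rw [Nat.card_sum, Nat.card_coe_set_eq]; rfl

lemma card_sub_compNum_induce_le (G : SimpleGraph V) (S : Set V) :
    Nat.card S - compNum (G.induce S) ≤ Nat.card V - compNum G := by
  have hdel := compNum_le_compNum_induce_add_ncard_compl G S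
  have hcard := Set.ncard_add_ncard_compl S
  rw [← Nat.card_coe_set_eq S] at hcard
  omega

lemma compNum_le_compNum_induce (G : SimpleGraph V) (S : Set V)
    (h : ∀ u, ∃ w ∈ S, G.Reachable u w) : compNum G ≤ compNum (G.induce S) := by
  refine Nat.card_le_card_of_surjective
    (ConnectedComponent.map (Embedding.induce S).toHom) (ConnectedComponent.ind fun u => ?_)
  obtain ⟨w, hw, huw⟩ := h u
  exact ⟨(G.induce S).connectedComponentMk ⟨w, hw⟩, ConnectedComponent.sound huw.symm⟩

lemma compNum_lt_card_of_adj {G : SimpleGraph V} {a b : V} (h : G.Adj a b) :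
    compNum G < Nat.card V := by
  classical
  cases nonempty_fintype V
  have := Fintype.ofFinite G.ConnectedComponent
  rw [compNum, Nat.card_eq_fintype_card, Nat.card_eq_fintype_card]
  exact Fintype.card_lt_of_surjective_not_injective _ (fun C => C.exists_rep)
    fun hinj => h.ne (hinj (ConnectedComponent.sound h.reachable))

lemma card_sub_compNum_induce_ne_lt {G : SimpleGraph V} {v a : V} (h : G.Adj v a) :
    Nat.card {u | u ≠ v} - compNum (G.induce {u | u ≠ v}) < Nat.card V - compNum G := by
  have hcomp : compNum G ≤ compNum (G.induce {u | u ≠ v}) := by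
    refine compNum_le_compNum_induce G _ fun u => ?_
    by_cases hu : u = v
    · exact ⟨a, h.ne', hu ▸ h.reachable⟩
    · exact ⟨u, hu, Reachable.rfl⟩
  have hcard : Nat.card {u | u ≠ v} + 1 = Nat.card V := by
    rw [Nat.card_coe_set_eq, add_comm, ← Set.ncard_singleton v]
    exact Set.ncard_add_ncard_compl {v}
  have := compNum_lt_card_of_adj h
  omega

lemma finsum_min_le_card_sub_compNum (G : SimpleGraph V) (k : ℕ) :
    ∑ᶠ C : G.ConnectedComponent, min k (C.supp.ncard - 1) ≤ Nat.card V - compNum G := by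
  cases nonempty_fintype G.ConnectedComponent
  have hcard : Nat.card V = ∑ C : G.ConnectedComponent, C.supp.ncard := by
    rw [← Nat.card_congr (Equiv.sigmaFiberEquiv G.connectedComponentMk), Nat.card_sigma]
    simp only [← Nat.card_coe_set_eq]
    rfl
  have hpos (C : G.ConnectedComponent) : 1 ≤ C.supp.ncard :=
    (Set.ncard_pos (Set.toFinite _)).mpr C.nonempty_supp
  rw [finsum_eq_sum_of_fintype, hcard, compNum, Nat.card_eq_fintype_card, ← Finset.card_univ,
    Finset.card_eq_sum_ones, Nat.le_sub_iff_add_le, ← Finset.sum_add_distrib]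
  · exact Finset.sum_le_sum fun C _ => by have := hpos C; omega
  · exact Finset.sum_le_sum fun C _ => hpos C

lemma exists_maxClq_superset (G : SimpleGraph V) {s : Set V} (hs : G.IsClique s) :
    ∃ t, MaxClq G t ∧ s ⊆ t := by
  obtain ⟨t, ⟨ht, hst⟩, hmax⟩ :=
    Set.Finite.exists_maximalFor id {t : Set V | G.IsClique t ∧ s ⊆ t}
      (Set.toFinite _) ⟨s, hs, subset_rfl⟩
  exact ⟨t, ⟨ht, fun t' ht' htt' => htt'.antisymm (hmax ⟨ht', hst.trans htt'⟩ htt')⟩, hst⟩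

/-- The edges `va` and `vb` lie in maximal cliques, which differ because `ab` is not an edge. -/
lemma internalVtx_of_adj_of_adj_of_not_adj {G : SimpleGraph V} {v a b : V} (ha : G.Adj v a)
    (hb : G.Adj v b) (hab : ¬ G.Adj a b) (hne : a ≠ b) : InternalVtx G v := by
  obtain ⟨s, hs, hvas⟩ := exists_maxClq_superset G (isClique_pair.mpr fun _ => ha)
  obtain ⟨t, ht, hvbt⟩ := exists_maxClq_superset G (isClique_pair.mpr fun _ => hb)
  refine ⟨s, t, hs, ht, ?_, hvas (by simp), hvbt (by simp)⟩
  rintro rfl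
  exact hab (hs.1 (hvas (by simp)) (hvbt (by simp)) hne)

end

theorem stmt7_general (m : ℕ) :
    RegCompatible m (fun V _ G => Nat.card V - compNum G) := by
  refine ⟨fun V _ G => card_sub_compNum_induce_le G _,
    fun V _ G _ _ => finsum_min_le_card_sub_compNum G (m - 1), ?_⟩
  rintro V _ G ⟨u, w, hne, hreach, hadj⟩
  obtain ⟨v, a, b, hva, hvb, hab, hne⟩ := G.exists_adj_adj_not_adj_of_reachable hne hreach hadj
  refine ⟨v, internalVtx_of_adj_of_adj_of_not_adj hva hvb hab hne, Or.inr ⟨?_, ?_, ?_⟩⟩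
  · exact card_sub_compNum_induce_le G _
  · exact congrArg (Nat.card V - ·) (compNum_addNbrEdges G v)
  · show _ < Nat.card V - compNum G
    rw [← compNum_addNbrEdges G v]
    exact card_sub_compNum_induce_ne_lt (G := addNbrEdges G v) (Or.inl hva)

/-- for every integer `m ≥ 2`, the map `G ↦ n(G) − c(G)` is
`(reg, m)`-compatible. -/
theorem stmt7 (m : ℕ) (hm : 2 ≤ m) :
    RegCompatible m (fun V _ G => Nat.card V - compNum G) :=
  stmt7_general m
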